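/- In the pair graph C(C_m) with m ≥ 4, partition the vertices into the sets L_q = {{j, m−(q−j)} : 1 ≤ j ≤ q}, q = 1,…,m. Then (1) L_i is linked to L_{i+1} for 1 ≤ i ≤ m−1, (2) L_i is linked to L_{m−i+1} for 1 ≤ i ≤ m−1, and (3) no other pairs L_i, L_j are linked; where A and B are linked if some edge of C(C_m) has one endpoint in A and one in B. -/

import Mathlib

/-- The independence number of a graph: the supremum of sizes of independent sets. -/
noncomputable def indepNum {V : Type*} (G : SimpleGraph V) : ℕ :=
  sSup {n | ∃ s : Finset V, s.card = n ∧ ∀ a ∈ s, ∀ b ∈ s, ¬ G.Adj a b}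

/-- The path graph on `n` vertices `0, 1, ..., n-1`. -/
def pathG (n : ℕ) : SimpleGraph (Fin n) :=
  SimpleGraph.fromRel (fun i j => (i : ℕ) + 1 = (j : ℕ))

/-- The cycle graph on `n` vertices `0, 1, ..., n-1`. -/
def cycleG (n : ℕ) : SimpleGraph (Fin n) :=
  SimpleGraph.fromRel (fun i j => (i : ℕ) + 1 = (j : ℕ) ∨ ((i : ℕ) = 0 ∧ (j : ℕ) = n - 1))

/-- The join of a graph `G` with a single extra vertex. -/
def joinK1 {V : Type*} (G : SimpleGraph V) : SimpleGraph (V ⊕ Unit) :=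
  SimpleGraph.fromRel (fun a b =>
    (∃ x y, G.Adj x y ∧ a = Sum.inl x ∧ b = Sum.inl y) ∨ (a.isLeft ∧ b.isRight))

/-- The fan graph `F_{m,1} = P_m + K_1`. -/
def fanG (m : ℕ) : SimpleGraph (Fin m ⊕ Unit) := joinK1 (pathG m)

/-- The wheel graph `W_{m,1} = C_m + K_1`. -/
def wheelG (m : ℕ) : SimpleGraph (Fin m ⊕ Unit) := joinK1 (cycleG m)

/-- The `k`-token graph: vertices are `k`-subsets of `V(G)`, two subsets adjacent
whenever their symmetric difference is an edge of `G`. -/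
def tokenGraph {V : Type*} [DecidableEq V] (k : ℕ) (G : SimpleGraph V) :
    SimpleGraph {A : Finset V // A.card = k} :=
  SimpleGraph.fromRel (fun A B => ∃ a b : V, G.Adj a b ∧ symmDiff A.1 B.1 = {a, b})

/-- The double vertex graph `G^(2)`: the `2`-token graph of `G`. -/
def doubleVertexGraph {V : Type*} [DecidableEq V] (G : SimpleGraph V) :
    SimpleGraph {A : Finset V // A.card = 2} :=
  tokenGraph 2 G

/-- The pair graph (complete double vertex graph) `C(G)`: vertices are the 2-multisets
of `V(G)`; `{a,x}` and `{a,y}` (distinct) are adjacent iff `x` and `y` are adjacent in `G`. -/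
def pairGraph {V : Type*} (G : SimpleGraph V) : SimpleGraph (Sym2 V) :=
  SimpleGraph.fromRel (fun s t => ∃ a x y : V, G.Adj x y ∧ s = Sym2.mk a x ∧ t = Sym2.mk a y)

/-- The set `L_q = {{j, m−(q−j)} : 1 ≤ j ≤ q}` of 2-multisets of the vertices of `C_m`,
written with 0-indexed vertices: `L_q = {{t, m−q+t} : 0 ≤ t < q}`. -/
def Lset (m q : ℕ) : Set (Sym2 (Fin m)) :=
  {s | ∃ t, t < q ∧ ∃ (h1 : t < m) (h2 : m - q + t < m),
    s = Sym2.mk ⟨t, h1⟩ ⟨m - q + t, h2⟩}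
/-- `A` and `B` are linked in `G` if some edge of `G` joins a vertex of `A` to one of `B`. -/
def Linked {V : Type*} (G : SimpleGraph V) (A B : Set V) : Prop :=
  ∃ a ∈ A, ∃ b ∈ B, G.Adj a b

/-!
`L_q` is the set of pairs `{u, v}` of vertices with `|u - v| = m - q`. An edge of `C(C_m)` keeps
one element of a pair and moves the other to a neighbour on the cycle. This changes `|u - v|` by
one unless the move uses the edge `{0, m - 1}`, in which case the two differences add up to
`m - 1`, that is `i + j = m + 1`. Conversely, `{0, m - i} ~ {0, m - i - 1}` links `L_i` to
`L_{i+1}`, and `{i - 1, m - 1} ~ {i - 1, 0}` links `L_i` to `L_{m-i+1}`.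
-/

open SimpleGraph

lemma pairGraph_adj_mk {V : Type*} {G : SimpleGraph V} (a : V) {x y : V} (h : G.Adj x y) :
    (pairGraph G).Adj s(a, x) s(a, y) := by
  rw [pairGraph, fromRel_adj]
  exact ⟨fun hxy => h.ne (Sym2.congr_right.mp hxy), Or.inl ⟨a, x, y, h, rfl, rfl⟩⟩

lemma exists_of_pairGraph_adj {V : Type*} {G : SimpleGraph V} {s t : Sym2 V}
    (h : (pairGraph G).Adj s t) : ∃ a x y, G.Adj x y ∧ s = s(a, x) ∧ t = s(a, y) := by
  rw [pairGraph, fromRel_adj] at h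
  obtain ⟨-, h | ⟨a, x, y, hxy, ht, hs⟩⟩ := h
  · exact h
  · exact ⟨a, y, x, hxy.symm, hs, ht⟩

lemma cycleG_adj_iff {m : ℕ} {x y : Fin m} :
    (cycleG m).Adj x y ↔ x ≠ y ∧ ((x : ℕ) + 1 = y ∨ (y : ℕ) + 1 = x ∨
      ((x : ℕ) = 0 ∧ (y : ℕ) = m - 1) ∨ ((y : ℕ) = 0 ∧ (x : ℕ) = m - 1)) := by
  rw [cycleG, fromRel_adj]
  tauto

lemma mk_mem_Lset {m q t : ℕ} {u v : Fin m} (ht : t < q) (hu : (u : ℕ) = t)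
    (hv : (v : ℕ) = m - q + t) : s(u, v) ∈ Lset m q :=
  ⟨t, ht, hu ▸ u.isLt, hv ▸ v.isLt, Sym2.eq_iff.2 (Or.inl ⟨Fin.ext hu, Fin.ext hv⟩)⟩

lemma Lset_indices_of_common_element {m i j p r a x y : ℕ} (hi : i ≤ m) (hj : j ≤ m)
    (hp : p < i) (hr : r < j) (hs : s(p, m - i + p) = s(a, x)) (ht : s(r, m - j + r) = s(a, y))
    (hxy : x + 1 = y ∨ y + 1 = x ∨ (x = 0 ∧ y = m - 1) ∨ (y = 0 ∧ x = m - 1)) :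
    j = i + 1 ∨ i = j + 1 ∨ i + j = m + 1 := by
  rw [Sym2.eq_iff] at hs ht
  omega

theorem Lset_links_general (m : ℕ) :
    (∀ i, 1 ≤ i → i ≤ m - 1 →
      Linked (pairGraph (cycleG m)) (Lset m i) (Lset m (i + 1))) ∧
    (∀ i, 1 ≤ i → i ≤ m - 1 →
      Linked (pairGraph (cycleG m)) (Lset m i) (Lset m (m - i + 1))) ∧
    (∀ i j, 1 ≤ i → i ≤ m → 1 ≤ j → j ≤ m → i ≠ j →
      Linked (pairGraph (cycleG m)) (Lset m i) (Lset m j) →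
      j = i + 1 ∨ i = j + 1 ∨ i + j = m + 1) := by
  refine ⟨fun i hi₁ hi₂ => ?_, fun i hi₁ hi₂ => ?_, ?_⟩
  · have hadj : (cycleG m).Adj ⟨m - i, by omega⟩ ⟨m - (i + 1), by omega⟩ :=
      cycleG_adj_iff.2 ⟨by simp only [ne_eq, Fin.mk.injEq]; omega,
        Or.inr (Or.inl (by dsimp only; omega))⟩
    exact ⟨_, mk_mem_Lset (t := 0) (by omega) rfl rfl, _, mk_mem_Lset (t := 0) (by omega) rfl rfl,
      pairGraph_adj_mk ⟨0, by omega⟩ hadj⟩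
  · have hwrap : (cycleG m).Adj ⟨m - 1, by omega⟩ ⟨0, by omega⟩ :=
      cycleG_adj_iff.2 ⟨by simp only [ne_eq, Fin.mk.injEq]; omega,
        Or.inr (Or.inr (Or.inr ⟨rfl, rfl⟩))⟩
    refine ⟨_, mk_mem_Lset (t := i - 1) (by omega) rfl (by dsimp only; omega), _, ?_,
      pairGraph_adj_mk ⟨i - 1, by omega⟩ hwrap⟩
    rw [Sym2.eq_swap]
    exact mk_mem_Lset (t := 0) (by omega) rfl (by dsimp only; omega)
  · rintro i j - hi - hj - ⟨s, hs, t, ht, hadj⟩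
    obtain ⟨p, hp, _, _, rfl⟩ := hs
    obtain ⟨r, hr, _, _, rfl⟩ := ht
    obtain ⟨a, x, y, hxy, hsa, hta⟩ := exists_of_pairGraph_adj hadj
    exact Lset_indices_of_common_element hi hj hp hr (by simpa using congrArg (Sym2.map Fin.val) hsa)
      (by simpa using congrArg (Sym2.map Fin.val) hta) (cycleG_adj_iff.1 hxy).2

/-- In `C(C_m)` with `m ≥ 4`: (1) `L_i` is linked to `L_{i+1}` for `1 ≤ i ≤ m−1`,
(2) `L_i` is linked to `L_{m−i+1}` for `1 ≤ i ≤ m−1`, and (3) these are the only links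
between distinct sets `L_i`, `L_j`. -/
theorem Lset_links (m : ℕ) (hm : 4 ≤ m) :
    (∀ i, 1 ≤ i → i ≤ m - 1 →
      Linked (pairGraph (cycleG m)) (Lset m i) (Lset m (i + 1))) ∧
    (∀ i, 1 ≤ i → i ≤ m - 1 →
      Linked (pairGraph (cycleG m)) (Lset m i) (Lset m (m - i + 1))) ∧
    (∀ i j, 1 ≤ i → i ≤ m → 1 ≤ j → j ≤ m → i ≠ j →
      Linked (pairGraph (cycleG m)) (Lset m i) (Lset m j) →
      j = i + 1 ∨ i = j + 1 ∨ i + j = m + 1) :=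
  Lset_links_general m
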